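/- arXiv:2601.00403 — 2 statements merged into one kernel-verified Lean document; each statement's English description precedes it below -/
import Mathlib

section
/- Let a, b, c ∈ ℂ and let G(a,b,c) = {(1,0), (a,1), (b,1), (c,1)} ⊆ ℂ². (1) For every Θ ⊆ 𝕋 with exactly two elements: G(a,b,c) fails Θ-PR in ℂ² if and only if a = b = c. (2) For every Θ ⊆ 𝕋 with exactly three elements: G(a,b,c) fails Θ-PR in ℂ² if and only if a = b or b = c or a = c. -/
open MeasureTheory Set

noncomputable section

/-- The unit circle in the complex plane. -/
def unitCircle : Set ℂ := {z : ℂ | ‖z‖ = 1}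

/-- `G` does `Θ`-PR in `H`.  The paper inner product `⟨f,g⟩` (linear in the first argument)
corresponds to Mathlib's `inner g f` (which is linear in the second argument). -/
def DoesPR {H : Type*} [NormedAddCommGroup H] [InnerProductSpace ℂ H]
    (G : Set H) (Θ : Set ℂ) : Prop :=
  ∀ f h : H, (∀ g ∈ G, ∃ θ ∈ Θ, (inner ℂ g f : ℂ) = θ * (inner ℂ g h : ℂ)) →
    ∃ θ ∈ Θ, f = θ • h

/-- The vector `(x, y)` in `ℂ²`. -/
def vec2 (x y : ℂ) : EuclideanSpace ℂ (Fin 2) := WithLp.toLp 2 ![x, y]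

/-- The system `G(a,b,c) = {(1,0), (a,1), (b,1), (c,1)} ⊆ ℂ²`. -/
def Gabc (a b c : ℂ) : Set (EuclideanSpace ℂ (Fin 2)) :=
  {vec2 1 0, vec2 a 1, vec2 b 1, vec2 c 1}

/-!
If two vectors of `G` that span the space receive the same phase `θ`, then `f - θ • h` is
orthogonal to both, so `f = θ • h`. Hence, by pigeonhole, `G` does `Θ`-PR as soon as it contains
more than `|Θ|` pairwise independent vectors; in `G(a,b,c)` this happens when `a ≠ b` for
`|Θ| = 2` and when `a, b, c` are distinct for `|Θ| = 3`.

Conversely, for linearly independent `u₁, u₂` and `θ₁ ≠ θ₂`, the pair `f = θ₂ u₁ - θ₁ u₂`,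
`h = u₁ - u₂` has `f - θ h = (θ₂ - θ) u₁ + (θ - θ₁) u₂ ≠ 0` for every `θ`, so `G` fails `Θ`-PR
once every `g ∈ G` is orthogonal to one of these vectors with `θ ∈ Θ`. In `ℂ²`, after rescaling
`u₁, u₂`, the lines orthogonal to these vectors for three distinct phases can be any three
distinct lines, and three lines cover `G(a,a,c)`.
-/

open Submodule

section InnerProductSpace

variable {H : Type*} [NormedAddCommGroup H] [InnerProductSpace ℂ H]

lemma eq_smul_of_inner_eq_mul_of_span_eq_top {S : Set H} (hS : span ℂ S = ⊤) {f h : H} {θ : ℂ}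
    (hfh : ∀ g ∈ S, inner ℂ g f = θ * inner ℂ g h) : f = θ • h := by
  have hortho : span ℂ S ⟂ span ℂ {f - θ • h} := by
    refine isOrtho_span.2 fun g hg d hd => ?_
    rw [Set.mem_singleton_iff.1 hd, inner_sub_right, inner_smul_right, hfh g hg, sub_self]
  have hmem : f - θ • h ∈ span ℂ S := hS ▸ mem_top
  exact sub_eq_zero.1 (inner_self_eq_zero.1 (hortho.inner_eq hmem (mem_span_singleton_self _)))

lemma doesPR_of_pairwise_span_eq_top {G : Set H} (s : Finset H) (hsG : ↑s ⊆ G)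
    (hs : (s : Set H).Pairwise fun g g' => span ℂ {g, g'} = ⊤) (t : Finset ℂ)
    (hcard : t.card < s.card) : DoesPR G t := by
  intro f h hfh
  choose! φ hφt hφ using hfh
  obtain ⟨g, hg, g', hg', hne, hφg⟩ :=
    Finset.exists_ne_map_eq_of_card_lt_of_maps_to hcard fun g hg => hφt g (hsG hg)
  refine ⟨φ g, hφt g (hsG hg), eq_smul_of_inner_eq_mul_of_span_eq_top (hs hg hg' hne) ?_⟩
  rintro _ (rfl | rfl)
  · exact hφ _ (hsG hg)
  · exact hφg ▸ hφ _ (hsG hg')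

lemma not_doesPR_of_linearIndependent {G : Set H} {Θ : Set ℂ} {u₁ u₂ : H}
    (hu : LinearIndependent ℂ ![u₁, u₂]) {θ₁ θ₂ : ℂ} (hθ : θ₁ ≠ θ₂)
    (hG : ∀ g ∈ G, ∃ θ ∈ Θ, inner ℂ g ((θ₂ - θ) • u₁ + (θ - θ₁) • u₂) = 0) :
    ¬ DoesPR G Θ := by
  have key : ∀ θ : ℂ, (θ₂ • u₁ - θ₁ • u₂) - θ • (u₁ - u₂) = (θ₂ - θ) • u₁ + (θ - θ₁) • u₂ := by
    intro θ; module
  intro hPR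
  obtain ⟨θ, -, hθeq⟩ := hPR (θ₂ • u₁ - θ₁ • u₂) (u₁ - u₂) fun g hg => by
    obtain ⟨θ, hθΘ, hg⟩ := hG g hg
    refine ⟨θ, hθΘ, ?_⟩
    rwa [← key, inner_sub_right, inner_smul_right, sub_eq_zero] at hg
  have := LinearIndependent.pair_iff.1 hu _ _ ((key θ).symm.trans (sub_eq_zero.2 hθeq))
  exact hθ (by linear_combination -this.1 - this.2)

end InnerProductSpace

open ComplexConjugate

lemma inner_vec2_vec2 (p q r s : ℂ) : inner ℂ (vec2 p q) (vec2 r s) = conj p * r + conj q * s := by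
  simp [vec2, PiLp.inner_apply, Fin.sum_univ_two, mul_comm]

lemma span_vec2_pair_eq_top {p q r s : ℂ} (hdet : p * s - q * r ≠ 0) :
    span ℂ {vec2 p q, vec2 r s} = ⊤ := by
  refine eq_top_iff.2 fun v _ => mem_span_pair.2
    ⟨(s * v 0 - r * v 1) / (p * s - q * r), (p * v 1 - q * v 0) / (p * s - q * r), ?_⟩
  ext i
  fin_cases i <;>
  · simp only [vec2, PiLp.add_apply, PiLp.smul_apply, smul_eq_mul, Fin.zero_eta, Fin.mk_one,
      Matrix.cons_val_zero, Matrix.cons_val_one, Matrix.cons_val_fin_one]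
    rw [div_mul_eq_mul_div, div_mul_eq_mul_div, ← add_div, div_eq_iff hdet]
    ring

lemma linearIndependent_vec2_pair {p q r s : ℂ} (hdet : p * s - q * r ≠ 0) :
    LinearIndependent ℂ ![vec2 p q, vec2 r s] := by
  refine LinearIndependent.pair_iff.2 fun α β hαβ => ?_
  have h0 : α * p + β * r = 0 := by simpa [vec2] using congrArg (· 0) hαβ
  have h1 : α * q + β * s = 0 := by simpa [vec2] using congrArg (· 1) hαβ
  have hα : α * (p * s - q * r) = 0 := by linear_combination s * h0 - r * h1
  have hβ : β * (p * s - q * r) = 0 := by linear_combination p * h1 - q * h0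
  exact ⟨(mul_eq_zero.1 hα).resolve_right hdet, (mul_eq_zero.1 hβ).resolve_right hdet⟩

lemma doesPR_of_forall_vec2_mem {G : Set (EuclideanSpace ℂ (Fin 2))} (S : Finset ℂ)
    (h₀ : vec2 1 0 ∈ G) (hS : ∀ x ∈ S, vec2 x 1 ∈ G) (t : Finset ℂ) (hcard : t.card ≤ S.card) :
    DoesPR G t := by
  have hinj : Function.Injective (vec2 · 1) := fun x y hxy => congrArg (· 0) hxy
  refine doesPR_of_pairwise_span_eq_top (insert (vec2 1 0) (S.image (vec2 · 1))) ?_ ?_ t ?_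
  · simp only [Finset.coe_insert, Finset.coe_image, Set.insert_subset_iff, Set.image_subset_iff]
    exact ⟨h₀, hS⟩
  · rintro g hg g' hg' hne
    simp only [Finset.coe_insert, Finset.coe_image, Set.mem_insert_iff, Set.mem_image,
      Finset.mem_coe] at hg hg'
    rcases hg with rfl | ⟨x, -, rfl⟩ <;> rcases hg' with rfl | ⟨y, -, rfl⟩
    · exact absurd rfl hne
    · exact span_vec2_pair_eq_top (by simp)
    · exact span_vec2_pair_eq_top (by simp)
    · exact span_vec2_pair_eq_top (by simpa [sub_eq_zero] using fun h : x = y => hne (h ▸ rfl))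
  · rw [Finset.card_insert_of_notMem (by simp [vec2]), Finset.card_image_of_injective _ hinj]
    omega

lemma not_doesPR_pair (a : ℂ) {Θ : Set ℂ} {θ₁ θ₂ : ℂ} (h₁ : θ₁ ∈ Θ) (h₂ : θ₂ ∈ Θ)
    (h₁₂ : θ₁ ≠ θ₂) : ¬ DoesPR {vec2 1 0, vec2 a 1} Θ := by
  refine not_doesPR_of_linearIndependent (u₁ := vec2 0 1) (u₂ := vec2 1 (-conj a))
    (linearIndependent_vec2_pair (by simp)) h₁₂ ?_
  rintro g (rfl | rfl) <;> [refine ⟨θ₁, h₁, ?_⟩; refine ⟨θ₂, h₂, ?_⟩] <;>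
    simp only [inner_add_right, inner_smul_right, inner_vec2_vec2, map_one, map_zero] <;> ring

lemma not_doesPR_triple {a c : ℂ} (hac : a ≠ c) {Θ : Set ℂ} {θ₁ θ₂ θ₃ : ℂ} (h₁ : θ₁ ∈ Θ)
    (h₂ : θ₂ ∈ Θ) (h₃ : θ₃ ∈ Θ) (h₁₂ : θ₁ ≠ θ₂) (h₁₃ : θ₁ ≠ θ₃) (h₂₃ : θ₂ ≠ θ₃) :
    ¬ DoesPR {vec2 1 0, vec2 a 1, vec2 c 1} Θ := by
  have hAC : conj a - conj c ≠ 0 := sub_ne_zero.2 ((starRingEnd ℂ).injective.ne hac)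
  -- `u₁ ⊥ (1,0)`, `u₂ ⊥ (a,1)`, scaled so that `(θ₂ - θ₃) • u₁ + (θ₃ - θ₁) • u₂ ⊥ (c,1)`.
  refine not_doesPR_of_linearIndependent
    (u₁ := vec2 0 ((θ₃ - θ₁) * (conj a - conj c))) (u₂ := vec2 (θ₂ - θ₃) (-(θ₂ - θ₃) * conj a))
    (linearIndependent_vec2_pair ?_) h₁₂ ?_
  · simp [sub_eq_zero, h₁₃.symm, h₂₃, hAC]
  rintro g (rfl | rfl | rfl) <;>
    [refine ⟨θ₁, h₁, ?_⟩; refine ⟨θ₂, h₂, ?_⟩; refine ⟨θ₃, h₃, ?_⟩] <;>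
    simp only [inner_add_right, inner_smul_right, inner_vec2_vec2, map_one, map_zero] <;> ring

lemma Gabc_swap₁₂ (a b c : ℂ) : Gabc a b c = Gabc b a c :=
  congrArg (insert _) (Set.insert_comm _ _ _)

lemma Gabc_swap₂₃ (a b c : ℂ) : Gabc a b c = Gabc a c b := by
  simp only [Gabc, Set.pair_comm]

lemma Gabc_self (a : ℂ) : Gabc a a a = {vec2 1 0, vec2 a 1} := by simp [Gabc]

lemma Gabc_self_left (a c : ℂ) : Gabc a a c = {vec2 1 0, vec2 a 1, vec2 c 1} := by simp [Gabc]

lemma not_doesPR_Gabc_self_left (a c : ℂ) {Θ : Set ℂ} {θ₁ θ₂ θ₃ : ℂ} (h₁ : θ₁ ∈ Θ) (h₂ : θ₂ ∈ Θ)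
    (h₃ : θ₃ ∈ Θ) (h₁₂ : θ₁ ≠ θ₂) (h₁₃ : θ₁ ≠ θ₃) (h₂₃ : θ₂ ≠ θ₃) : ¬ DoesPR (Gabc a a c) Θ := by
  by_cases hac : a = c
  · rw [← hac, Gabc_self]
    exact not_doesPR_pair a h₁ h₂ h₁₂
  · rw [Gabc_self_left]
    exact not_doesPR_triple hac h₁ h₂ h₃ h₁₂ h₁₃ h₂₃

lemma doesPR_Gabc_of_subset {a b c : ℂ} (S : Finset ℂ) (hS : ↑S ⊆ ({a, b, c} : Set ℂ))
    (t : Finset ℂ) (hcard : t.card ≤ S.card) : DoesPR (Gabc a b c) t := by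
  refine doesPR_of_forall_vec2_mem S (by simp [Gabc]) (fun x hx => ?_) t hcard
  rcases hS hx with rfl | rfl | rfl <;> simp [Gabc]

lemma not_doesPR_Gabc_pair_iff {a b c θ₁ θ₂ : ℂ} (h₁₂ : θ₁ ≠ θ₂) :
    ¬ DoesPR (Gabc a b c) {θ₁, θ₂} ↔ a = b ∧ b = c := by
  refine ⟨fun hfail => ?_, ?_⟩
  · by_contra hne
    apply hfail
    rw [← Finset.coe_pair]
    rcases not_and_or.1 hne with hab | hbc
    · exact doesPR_Gabc_of_subset {a, b} (by simp [Set.insert_subset_iff])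
        _ (Finset.card_pair hab ▸ Finset.card_le_two)
    · exact doesPR_Gabc_of_subset {b, c} (by simp) _ (Finset.card_pair hbc ▸ Finset.card_le_two)
  · rintro ⟨rfl, rfl⟩
    rw [Gabc_self]
    exact not_doesPR_pair a (by simp) (by simp) h₁₂

lemma not_doesPR_Gabc_triple_iff {a b c θ₁ θ₂ θ₃ : ℂ} (h₁₂ : θ₁ ≠ θ₂) (h₁₃ : θ₁ ≠ θ₃)
    (h₂₃ : θ₂ ≠ θ₃) : ¬ DoesPR (Gabc a b c) {θ₁, θ₂, θ₃} ↔ a = b ∨ b = c ∨ a = c := by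
  have h₁ : θ₁ ∈ ({θ₁, θ₂, θ₃} : Set ℂ) := by simp
  have h₂ : θ₂ ∈ ({θ₁, θ₂, θ₃} : Set ℂ) := by simp
  have h₃ : θ₃ ∈ ({θ₁, θ₂, θ₃} : Set ℂ) := by simp
  refine ⟨fun hfail => ?_, ?_⟩
  · by_contra! ⟨hab, hbc, hac⟩
    apply hfail
    rw [← Finset.coe_pair, ← Finset.coe_insert]
    exact doesPR_Gabc_of_subset {a, b, c} (by simp)
      _ (Finset.card_eq_three.2 ⟨a, b, c, hab, hac, hbc, rfl⟩ ▸ Finset.card_le_three)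
  · rintro (rfl | rfl | rfl)
    · exact not_doesPR_Gabc_self_left a c h₁ h₂ h₃ h₁₂ h₁₃ h₂₃
    · rw [Gabc_swap₁₂, Gabc_swap₂₃]
      exact not_doesPR_Gabc_self_left b a h₁ h₂ h₃ h₁₂ h₁₃ h₂₃
    · rw [Gabc_swap₂₃]
      exact not_doesPR_Gabc_self_left a b h₁ h₂ h₃ h₁₂ h₁₃ h₂₃

theorem stmt17 (a b c : ℂ) :
    (∀ Θ : Set ℂ, Θ ⊆ unitCircle → (∃ θ₁ θ₂ : ℂ, θ₁ ≠ θ₂ ∧ Θ = {θ₁, θ₂}) →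
      (¬ DoesPR (Gabc a b c) Θ ↔ (a = b ∧ b = c))) ∧
    (∀ Θ : Set ℂ, Θ ⊆ unitCircle →
      (∃ θ₁ θ₂ θ₃ : ℂ, θ₁ ≠ θ₂ ∧ θ₁ ≠ θ₃ ∧ θ₂ ≠ θ₃ ∧ Θ = {θ₁, θ₂, θ₃}) →
      (¬ DoesPR (Gabc a b c) Θ ↔ (a = b ∨ b = c ∨ a = c))) := by
  refine ⟨?_, ?_⟩
  · rintro Θ - ⟨θ₁, θ₂, h₁₂, rfl⟩
    exact not_doesPR_Gabc_pair_iff h₁₂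
  · rintro Θ - ⟨θ₁, θ₂, θ₃, h₁₂, h₁₃, h₂₃, rfl⟩
    exact not_doesPR_Gabc_triple_iff h₁₂ h₁₃ h₂₃
end
end

section
/- Let a, b, c ∈ ℂ and let G = {(1,0), (a,1), (b,1), (c,1)} ⊆ ℂ². Then G fails 𝕋-PR (phase retrieval) in ℂ² if and only if b = a, or b ≠ a and (c − a)/(b − a) is a real number. -/
open MeasureTheory Set

noncomputable section

/-! Measuring with `(1,0)` fixes `|f₀| = |h₀|`; then `|⟨f,(x,1)⟩|² - |⟨h,(x,1)⟩|²` is the real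
affine function `2 Re (x̄ D) + |f₁|² - |h₁|²` of `x`, where `D = f₀ f̄₁ - h₀ h̄₁`. If it vanishes at
three non-collinear points `a, b, c`, then `D = 0` and `|f₁| = |h₁|`, so `f f* = h h*` and `f` is a
unimodular multiple of `h`. If `a, b, c` lie on a line `a + ℝ e`, the vectors `(1, -ā ± i ē)`,
which are not unimodular multiples of each other, have the same measurements. -/

open scoped ComplexConjugate
open Complex (I normSq)

lemma normSq_eq_one_of_mem_unitCircle {θ : ℂ} (hθ : θ ∈ unitCircle) : normSq θ = 1 := by
  rw [Complex.normSq_eq_norm_sq, show ‖θ‖ = 1 from hθ, one_pow]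

lemma exists_mem_unitCircle_mul_iff {z w : ℂ} :
    (∃ θ ∈ unitCircle, z = θ * w) ↔ normSq z = normSq w := by
  constructor
  · rintro ⟨θ, hθ, rfl⟩
    rw [Complex.normSq_mul, normSq_eq_one_of_mem_unitCircle hθ, one_mul]
  · intro hzw
    have hnorm : ‖z‖ = ‖w‖ := by simp only [Complex.norm_def, hzw]
    rcases eq_or_ne w 0 with rfl | hw
    · exact ⟨1, by simp [unitCircle], by simpa using hnorm⟩
    · refine ⟨z / w, ?_, (div_mul_cancel₀ z hw).symm⟩
      simp [unitCircle, hnorm, hw]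

lemma exists_mem_unitCircle_smul_of_mul_conj_eq {ι : Type*} {f h : EuclideanSpace ℂ ι}
    (hfh : ∀ i j, f i * conj (f j) = h i * conj (h j)) :
    ∃ θ ∈ unitCircle, f = θ • h := by
  by_cases h0 : h = 0
  · refine ⟨1, by simp [unitCircle], ?_⟩
    ext i
    simpa [h0] using hfh i i
  obtain ⟨j, hj⟩ : ∃ j, h j ≠ 0 := by
    by_contra! hzero
    exact h0 (by ext i; simp [hzero])
  have hnormSq : normSq (f j) = normSq (h j) := by
    exact_mod_cast (Complex.mul_conj _).symm.trans ((hfh j j).trans (Complex.mul_conj _))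
  obtain ⟨θ, hθ, hfj⟩ := exists_mem_unitCircle_mul_iff.2 hnormSq
  refine ⟨θ, hθ, ?_⟩
  ext i
  have hcj : conj (h j) ≠ 0 := (map_ne_zero _).2 hj
  have hθθ : θ * conj θ = 1 := by
    rw [Complex.mul_conj, normSq_eq_one_of_mem_unitCircle hθ, Complex.ofReal_one]
  have : f i * conj θ = h i := mul_right_cancel₀ hcj (by
    rw [mul_assoc, ← map_mul, ← hfj, hfh])
  rw [PiLp.smul_apply, smul_eq_mul, ← this, mul_left_comm, hθθ, mul_one]

lemma inner_vec2 (x y : ℂ) (f : EuclideanSpace ℂ (Fin 2)) :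
    inner ℂ (vec2 x y) f = conj x * f 0 + conj y * f 1 := by
  simp only [vec2, PiLp.inner_apply, RCLike.inner_apply, Fin.sum_univ_two, Matrix.cons_val_zero,
    Matrix.cons_val_one, Matrix.cons_val_fin_one]
  ring

@[simp] lemma vec2_zero (x y : ℂ) : vec2 x y 0 = x := rfl
@[simp] lemma vec2_one (x y : ℂ) : vec2 x y 1 = y := rfl

lemma Gabc_eq (a b c : ℂ) : Gabc a b c = insert (vec2 1 0) ((vec2 · 1) '' {a, b, c}) := by
  simp [Gabc, Set.image_insert_eq]

lemma normSq_inner_vec2_one (x : ℂ) (f : EuclideanSpace ℂ (Fin 2)) :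
    normSq (inner ℂ (vec2 x 1) f) =
      normSq x * normSq (f 0) + 2 * (conj x * (f 0 * conj (f 1))).re + normSq (f 1) := by
  rw [inner_vec2, map_one, one_mul, Complex.normSq_add, Complex.normSq_mul, Complex.normSq_conj,
    mul_assoc]
  ring

lemma eq_zero_of_re_conj_mul_eq_zero {u v z : ℂ} (huv : (v / u).im ≠ 0)
    (hu : (conj u * z).re = 0) (hv : (conj v * z).re = 0) : z = 0 := by
  have hdet : v.im * u.re - v.re * u.im ≠ 0 := by
    contrapose! huv
    rw [Complex.div_im, ← sub_div, huv, zero_div]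
  simp only [Complex.mul_re, Complex.conj_re, Complex.conj_im] at hu hv
  apply Complex.ext
  · exact (mul_eq_zero.1 (by linear_combination v.im * hu - u.im * hv :
      z.re * (v.im * u.re - v.re * u.im) = 0)).resolve_right hdet
  · exact (mul_eq_zero.1 (by linear_combination u.re * hv - v.re * hu :
      z.im * (v.im * u.re - v.re * u.im) = 0)).resolve_right hdet

theorem doesPR_Gabc {a b c : ℂ} (habc : ((c - a) / (b - a)).im ≠ 0) :
    DoesPR (Gabc a b c) unitCircle := by
  intro f h hmeas
  have hsq : ∀ g ∈ Gabc a b c, normSq (inner ℂ g f) = normSq (inner ℂ g h) :=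
    fun g hg ↦ exists_mem_unitCircle_mul_iff.1 (hmeas g hg)
  rw [Gabc_eq] at hsq
  have h0 : normSq (f 0) = normSq (h 0) := by
    simpa [inner_vec2] using hsq _ (Set.mem_insert _ _)
  set D := f 0 * conj (f 1) - h 0 * conj (h 1) with hD_def
  have hline : ∀ x ∈ ({a, b, c} : Set ℂ),
      2 * (conj x * D).re + (normSq (f 1) - normSq (h 1)) = 0 := by
    intro x hx
    have := hsq _ (Set.mem_insert_of_mem _ (Set.mem_image_of_mem _ hx))
    rw [normSq_inner_vec2_one, normSq_inner_vec2_one, h0] at this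
    rw [hD_def, mul_sub, Complex.sub_re]
    linarith
  have hre : ∀ y, (conj (y - a) * D).re = (conj y * D).re - (conj a * D).re := fun y ↦ by
    rw [map_sub, sub_mul, Complex.sub_re]
  have hD : D = 0 := by
    refine eq_zero_of_re_conj_mul_eq_zero habc ?_ ?_ <;> rw [hre]
    · linarith [hline a (by simp), hline b (by simp)]
    · linarith [hline a (by simp), hline c (by simp)]
  have h1 : normSq (f 1) = normSq (h 1) := by
    linarith [hline a (by simp), show (conj a * D).re = 0 by simp [hD]]
  have h01 : f 0 * conj (f 1) = h 0 * conj (h 1) := sub_eq_zero.1 hD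
  apply exists_mem_unitCircle_smul_of_mul_conj_eq
  simp only [Fin.forall_fin_two, Complex.mul_conj, h0, h1]
  exact ⟨⟨trivial, h01⟩, by simpa [mul_comm] using congrArg conj h01, trivial⟩

theorem not_doesPR_of_subset_line {G : Set (EuclideanSpace ℂ (Fin 2))} {a e : ℂ} (he : e ≠ 0)
    (hG : G ⊆ insert (vec2 1 0) (Set.range fun t : ℝ ↦ vec2 (a + t * e) 1)) :
    ¬ DoesPR G unitCircle := by
  intro hPR
  -- The second coordinates `-conj a ± I * conj e` are mirror images in the line
  -- `-conj (a + ℝ e)`, so no `vec2 (a + t * e) 1` tells the two vectors apart.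
  obtain ⟨θ, -, hfh⟩ := hPR (vec2 1 (-conj a + I * conj e)) (vec2 1 (-conj a - I * conj e)) <| by
    intro g hg
    rcases hG hg with rfl | ⟨t, rfl⟩
    · exact ⟨1, by simp [unitCircle], by simp [inner_vec2]⟩
    · have hf : inner ℂ (vec2 (a + t * e) 1) (vec2 1 (-conj a + I * conj e)) =
          (t + I) * conj e := by
        simp only [inner_vec2, vec2_zero, vec2_one, map_add, map_mul, Complex.conj_ofReal, map_one]
        ring
      have hh : inner ℂ (vec2 (a + t * e) 1) (vec2 1 (-conj a - I * conj e)) =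
          conj (t + I) * conj e := by
        simp only [inner_vec2, vec2_zero, vec2_one, map_add, map_mul, Complex.conj_ofReal,
          Complex.conj_I, map_one]
        ring
      simp only [exists_mem_unitCircle_mul_iff, hf, hh, Complex.normSq_mul, Complex.normSq_conj]
  have hθ : θ = 1 := (by simpa using congrArg (· 0) hfh : 1 = θ).symm
  have h1 := congrArg (· 1) hfh
  simp only [hθ, one_smul, vec2_one] at h1
  have : I * conj e = 0 := by linear_combination h1 / 2
  simp [he] at this

lemma exists_line_of_collinear {a b c : ℂ}
    (habc : b = a ∨ (b ≠ a ∧ ((c - a) / (b - a)).im = 0)) :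
    ∃ e ≠ 0, ∀ x ∈ ({a, b, c} : Set ℂ), ∃ t : ℝ, x = a + t * e := by
  simp only [Set.mem_insert_iff, Set.mem_singleton_iff, forall_eq_or_imp, forall_eq]
  rcases habc with rfl | ⟨hba, him⟩
  · rcases eq_or_ne c b with rfl | hcb
    · exact ⟨1, one_ne_zero, ⟨0, by simp⟩, ⟨0, by simp⟩, ⟨0, by simp⟩⟩
    · exact ⟨c - b, sub_ne_zero.2 hcb, ⟨0, by simp⟩, ⟨0, by simp⟩, ⟨1, by simp⟩⟩
  · have hreal : (((c - a) / (b - a)).re : ℂ) = (c - a) / (b - a) := Complex.ext rfl (by simp [him])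
    refine ⟨b - a, sub_ne_zero.2 hba, ⟨0, by simp⟩, ⟨1, by simp⟩, ⟨((c - a) / (b - a)).re, ?_⟩⟩
    rw [hreal, div_mul_cancel₀ _ (sub_ne_zero.2 hba)]
    ring

theorem stmt19 (a b c : ℂ) :
    ¬ DoesPR (Gabc a b c) unitCircle ↔
      b = a ∨ (b ≠ a ∧ ((c - a) / (b - a)).im = 0) := by
  constructor
  · intro hfail
    by_contra! hPR
    exact hfail (doesPR_Gabc (hPR.2 hPR.1))
  · intro habc
    obtain ⟨e, he, hline⟩ := exists_line_of_collinear habc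
    refine not_doesPR_of_subset_line (a := a) he ?_
    rw [Gabc_eq]
    refine Set.insert_subset_insert (Set.image_subset_iff.2 fun x hx ↦ ?_)
    obtain ⟨t, rfl⟩ := hline x hx
    exact ⟨t, rfl⟩
end
end
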